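/- Let a_r, λ, β_r, P, σ₀², σ_s², η₀, ζ, d_s, α, D, p_r, q_r, σ_re² > 0. Let X, d, Y be independent random variables with X having CDF γ(p_r, √x/q_r)/Γ(p_r) on [0, ∞), d having density z ↦ 2z/D² on [0, D], and Y exponential with mean σ_re². Define γ_r = a_r·λ·β_r·P·G_c / ( λ·β_r·W + Y·P + σ₀² ), where G_c = η₀²·(d_s·d)^{−α}·X and W = η₀·d^{−α}·σ_s²·ζ. Then the ergodic data rate of U_r with ipSIC satisfies E[log₂(1 + γ_r)] = (1/ln 2) · ∫_0^∞ (1/(1 + x)) · [ 1 − F(x) ] dx, where F(x) = ∫_0^∞ ∫_0^D (1/σ_re²)·e^{−y/σ_re²} · (2z/D²) · γ( p_r, √(T_x(y, z))/q_r )/Γ(p_r) dz dy and T_x(y, z) = (x·d_s^α/(a_r·P))·( ζ·σ_s²/η₀ + (z^α/η₀²)·( y·P/(β_r·λ) + σ₀²/(β_r·λ) ) ). -/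

import Mathlib

/-!
By the layer-cake formula, `E[log(1 + γ)] = ∫_0^∞ P(γ > x) / (1 + x) dx` for `γ ≥ 0`. Almost surely
`d > 0` and `Y ≥ 0`, and there the event `γ_r ≤ x` is `X ≤ T_x(Y, d)`. As `X` is independent of
`(Y, d)`, conditioning on `(Y, d)` gives `P(γ_r ≤ x) = E[F_X(T_x(Y, d))]`, which is `F(x)` once the
laws of `Y` and `d` are written through their densities.
-/

open MeasureTheory ProbabilityTheory

/-- The lower incomplete gamma function `γ(p, t) = ∫_0^t u^{p−1} e^{−u} du`. -/
noncomputable def lowerGamma (p t : ℝ) : ℝ :=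
  ∫ u in Set.Ioc (0 : ℝ) t, u ^ (p - 1) * Real.exp (-u)

open scoped ENNReal

open Set Real

theorem lowerGamma_nonneg (p t : ℝ) : 0 ≤ lowerGamma p t :=
  setIntegral_nonneg measurableSet_Ioc fun _ hu =>
    mul_nonneg (rpow_nonneg hu.1.le _) (exp_pos _).le

@[fun_prop]
theorem measurable_lowerGamma (p : ℝ) : Measurable (lowerGamma p) := by
  have hS : MeasurableSet {q : ℝ × ℝ | q.2 ∈ Ioc 0 q.1} :=
    (measurableSet_lt measurable_const measurable_snd).inter
      (measurableSet_le measurable_snd measurable_fst)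
  have := ((by fun_prop : Measurable fun q : ℝ × ℝ => q.2 ^ (p - 1) * exp (-q.2)).indicator
    hS).stronglyMeasurable.integral_prod_right' (ν := volume)
  convert this.measurable using 2 with t
  rw [lowerGamma, ← integral_indicator measurableSet_Ioc]
  rfl

theorem integral_inv_one_add {a : ℝ} (ha : 0 ≤ a) : ∫ t in (0 : ℝ)..a, (1 + t)⁻¹ = log (1 + a) := by
  have h0 : (0 : ℝ) ∉ uIcc 1 (1 + a) := by
    rw [uIcc_of_le (by linarith)]
    exact fun h => by linarith [h.1]
  rw [intervalIntegral.integral_comp_add_left (fun t => t⁻¹), add_zero, integral_inv h0, div_one]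

theorem integral_log_one_add_eq_integral_meas_le {Ω : Type*} [MeasurableSpace Ω] {μ : Measure Ω}
    [IsProbabilityMeasure μ] {f : Ω → ℝ} (hf : Measurable f) (hf0 : 0 ≤ᵐ[μ] f) :
    ∫ ω, log (1 + f ω) ∂μ = ∫ x in Ioi 0, (1 + x)⁻¹ * (1 - (μ {ω | f ω ≤ x}).toReal) := by
  have hcdf : Measurable fun x => (μ {ω | f ω ≤ x}).toReal :=
    Monotone.measurable fun s t hst =>
      ENNReal.toReal_mono (measure_ne_top _ _) (measure_mono fun ω hω => le_trans hω hst)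
  have hg : ∀ t > 0, IntervalIntegrable (fun t : ℝ => (1 + t)⁻¹) volume 0 t := fun t ht =>
    (ContinuousOn.inv₀ (by fun_prop) fun x hx => by
      rw [uIcc_of_le ht.le] at hx; linarith [hx.1]).intervalIntegrable
  have hg0 : ∀ᵐ t ∂volume.restrict (Ioi (0 : ℝ)), 0 ≤ (1 + t)⁻¹ := by
    filter_upwards [ae_restrict_mem measurableSet_Ioi] with t ht
    exact inv_nonneg.2 (by linarith [mem_Ioi.1 ht])
  rw [integral_eq_lintegral_of_nonneg_ae, integral_eq_lintegral_of_nonneg_ae]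
  · congr 1
    calc ∫⁻ ω, ENNReal.ofReal (log (1 + f ω)) ∂μ
        = ∫⁻ ω, ENNReal.ofReal (∫ t in (0 : ℝ)..f ω, (1 + t)⁻¹) ∂μ := by
          refine lintegral_congr_ae ?_
          filter_upwards [hf0] with ω hω
          rw [integral_inv_one_add hω]
      _ = ∫⁻ t in Ioi 0, μ {ω | t < f ω} * ENNReal.ofReal (1 + t)⁻¹ :=
          lintegral_comp_eq_lintegral_meas_lt_mul μ hf0 hf.aemeasurable hg hg0
      _ = _ := by
          refine setLIntegral_congr_fun measurableSet_Ioi fun t ht => ?_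
          have hc : {ω | t < f ω} = {ω | f ω ≤ t}ᶜ := by ext; simp
          rw [hc, prob_compl_eq_one_sub (measurableSet_le hf measurable_const),
            ENNReal.ofReal_mul (inv_nonneg.2 (by linarith [mem_Ioi.1 ht])), mul_comm,
            ENNReal.ofReal_sub _ ENNReal.toReal_nonneg, ENNReal.ofReal_one,
            ENNReal.ofReal_toReal (measure_ne_top _ _)]
  · filter_upwards [hg0] with t ht
    exact mul_nonneg ht
      (sub_nonneg.2 (by simpa using ENNReal.toReal_mono ENNReal.one_ne_top prob_le_one))
  · exact ((by fun_prop : Measurable fun x : ℝ => (1 + x)⁻¹).mul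
      (measurable_const.sub hcdf)).aestronglyMeasurable
  · filter_upwards [hf0] with ω hω
    exact log_nonneg (by linarith [show 0 ≤ f ω from hω])
  · exact (measurable_log.comp (measurable_const.add hf)).aestronglyMeasurable

theorem ae_nonneg_of_map_eq_expMeasure {Ω : Type*} [MeasurableSpace Ω] {μ : Measure Ω}
    {Y : Ω → ℝ} (hY : Measurable Y) {r : ℝ} (hYr : μ.map Y = expMeasure r) :
    ∀ᵐ ω ∂μ, 0 ≤ Y ω := by
  refine ae_of_ae_map hY.aemeasurable ?_
  rw [hYr, ae_iff]
  simp only [not_le]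
  exact (withDensity_apply _ measurableSet_Iio).trans (lintegral_exponentialPDF_of_nonpos le_rfl)

theorem ae_mem_Ioc_of_map_eq_withDensity {Ω : Type*} [MeasurableSpace Ω] {μ : Measure Ω}
    {d : Ω → ℝ} (hd : Measurable d) {a b : ℝ} {f : ℝ → ℝ≥0∞}
    (hdf : μ.map d = (volume.restrict (Icc a b)).withDensity f) :
    ∀ᵐ ω ∂μ, d ω ∈ Ioc a b := by
  refine ae_of_ae_map hd.aemeasurable ?_
  rw [hdf, ← Measure.restrict_congr_set Ioc_ae_eq_Icc]
  exact (withDensity_absolutelyContinuous _ _).ae_le (ae_restrict_mem measurableSet_Ioc)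

theorem lintegral_expMeasure {r : ℝ} {K : ℝ → ℝ≥0∞} (hK : Measurable K) :
    ∫⁻ y, K y ∂expMeasure r = ∫⁻ y in Ioi 0, ENNReal.ofReal (r * exp (-(r * y))) * K y := by
  rw [expMeasure, gammaMeasure, lintegral_withDensity_eq_lintegral_mul _
    (show Measurable (gammaPDF 1 r) from (measurable_gammaPDFReal 1 r).ennreal_ofReal) hK,
    ← lintegral_add_compl _ measurableSet_Iio, compl_Iio,
    ← Measure.restrict_congr_set Ioi_ae_eq_Ici]
  have hneg : ∫⁻ y in Iio 0, (gammaPDF 1 r * K) y = 0 :=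
    setLIntegral_eq_zero measurableSet_Iio fun y hy => by
      simp [gammaPDF_of_neg (mem_Iio.1 hy)]
  rw [hneg, zero_add]
  refine setLIntegral_congr_fun measurableSet_Ioi fun y hy => ?_
  rw [Pi.mul_apply, ← exponentialPDF_of_nonneg (le_of_lt hy)]
  rfl

theorem ProbabilityTheory.IndepFun.measure_le_comp_eq_lintegral {Ω β : Type*}
    [MeasurableSpace Ω] [MeasurableSpace β] {μ : Measure Ω} [IsFiniteMeasure μ]
    {V : Ω → β} {X : Ω → ℝ} (hVX : IndepFun V X μ) (hV : Measurable V) (hX : Measurable X)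
    {g : β → ℝ} (hg : Measurable g) :
    μ {ω | X ω ≤ g (V ω)} = ∫⁻ v, μ {ω | X ω ≤ g v} ∂μ.map V := by
  have hS : MeasurableSet {p : β × ℝ | p.2 ≤ g p.1} :=
    measurableSet_le measurable_snd (hg.comp measurable_fst)
  rw [show {ω | X ω ≤ g (V ω)} = (fun ω => (V ω, X ω)) ⁻¹' {p | p.2 ≤ g p.1} from rfl,
    ← Measure.map_apply (hV.prodMk hX) hS,
    (indepFun_iff_map_prod_eq_prod_map_map hV.aemeasurable hX.aemeasurable).1 hVX,
    Measure.prod_apply hS]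
  exact lintegral_congr fun v => Measure.map_apply hX (s := Iic (g v)) measurableSet_Iic

theorem ProbabilityTheory.iIndepFun.measure_le_comp₂_eq_lintegral_lintegral {Ω : Type*}
    [MeasurableSpace Ω] {μ : Measure Ω} [IsFiniteMeasure μ] {X d Y : Ω → ℝ}
    (hindep : iIndepFun ![X, d, Y] μ) (hX : Measurable X) (hd : Measurable d) (hY : Measurable Y)
    {g : ℝ → ℝ → ℝ} (hg : Measurable (Function.uncurry g)) :
    μ {ω | X ω ≤ g (Y ω) (d ω)} = ∫⁻ y, ∫⁻ z, μ {ω | X ω ≤ g y z} ∂μ.map d ∂μ.map Y := by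
  have hmeas : ∀ i, Measurable (![X, d, Y] i) := by
    intro i
    fin_cases i <;> assumption
  have hYdX : IndepFun (fun ω => (Y ω, d ω)) X μ := by
    simpa using hindep.indepFun_prodMk hmeas 2 1 0 (by decide) (by decide)
  have hYd : IndepFun Y d μ := by
    simpa using hindep.indepFun (show (2 : Fin 3) ≠ 1 by decide)
  have hΦ : Measurable fun t => μ {ω | X ω ≤ t} :=
    Monotone.measurable fun _ _ hst => measure_mono fun _ hω => le_trans hω hst
  refine (hYdX.measure_le_comp_eq_lintegral (hY.prodMk hd) hX hg).trans ?_
  rw [(indepFun_iff_map_prod_eq_prod_map_map hY.aemeasurable hd.aemeasurable).1 hYd,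
    lintegral_prod (fun v => μ {ω | X ω ≤ Function.uncurry g v}) (hΦ.comp hg).aemeasurable]
  rfl

theorem integral_integral_eq_toReal_lintegral_lintegral {α β : Type*} [MeasurableSpace α]
    [MeasurableSpace β] {μ : Measure α} {ν : Measure β} [SFinite ν] {f : α → β → ℝ}
    (hf : Measurable (Function.uncurry f)) (hf0 : ∀ a, 0 ≤ᵐ[ν] f a)
    (hfin : ∀ᵐ a ∂μ, ∫⁻ b, ENNReal.ofReal (f a b) ∂ν ≠ ∞) :
    ∫ a, ∫ b, f a b ∂ν ∂μ = (∫⁻ a, ∫⁻ b, ENNReal.ofReal (f a b) ∂ν ∂μ).toReal := by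
  rw [integral_eq_lintegral_of_nonneg_ae (ae_of_all _ fun a => integral_nonneg_of_ae (hf0 a))
    hf.stronglyMeasurable.integral_prod_right'.aestronglyMeasurable]
  congr 1
  refine lintegral_congr_ae ?_
  filter_upwards [hfin] with a ha
  rw [integral_eq_lintegral_of_nonneg_ae (hf0 a)
    (hf.comp measurable_prodMk_left).aestronglyMeasurable,
    ENNReal.ofReal_toReal ha]

theorem toReal_measure_le_comp_eq_integral_integral {Ω : Type*} [MeasurableSpace Ω]
    {μ : Measure Ω} [IsProbabilityMeasure μ] {X d Y : Ω → ℝ}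
    (hX : Measurable X) (hd : Measurable d) (hY : Measurable Y)
    (hindep : iIndepFun ![X, d, Y] μ)
    {G : ℝ → ℝ} (hG : Measurable G) (hG0 : ∀ t, 0 ≤ G t)
    (hXG : ∀ t, 0 ≤ t → μ {ω | X ω ≤ t} = ENNReal.ofReal (G t))
    {s : Set ℝ} (hs : MeasurableSet s) {w : ℝ → ℝ} (hw : Measurable w) (hw0 : ∀ z ∈ s, 0 ≤ w z)
    (hdw : μ.map d = (volume.restrict s).withDensity fun z => ENNReal.ofReal (w z))
    {r : ℝ} (hr : 0 ≤ r) (hYr : μ.map Y = expMeasure r)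
    {g : ℝ → ℝ → ℝ} (hg : Measurable (Function.uncurry g))
    (hg0 : ∀ y z, 0 ≤ y → z ∈ s → 0 ≤ g y z) :
    (μ {ω | X ω ≤ g (Y ω) (d ω)}).toReal =
      ∫ y in Ioi 0, ∫ z in s, r * exp (-(r * y)) * w z * G (g y z) := by
  have hΦ : Measurable fun t => μ {ω | X ω ≤ t} :=
    Monotone.measurable fun _ _ hst => measure_mono fun _ hω => le_trans hω hst
  have hinner : ∀ y, 0 ≤ y → ∫⁻ z in s, ENNReal.ofReal (r * exp (-(r * y)) * w z * G (g y z))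
      = ENNReal.ofReal (r * exp (-(r * y))) * ∫⁻ z, μ {ω | X ω ≤ g y z} ∂μ.map d := by
    intro y hy
    rw [hdw, lintegral_withDensity_eq_lintegral_mul _ hw.ennreal_ofReal
      (show Measurable fun z => μ {ω | X ω ≤ g y z} from hΦ.comp (hg.comp measurable_prodMk_left)),
      ← lintegral_const_mul' _ _ ENNReal.ofReal_ne_top]
    refine setLIntegral_congr_fun hs fun z hz => ?_
    rw [Pi.mul_apply, hXG _ (hg0 y z hy hz), mul_assoc,
      ENNReal.ofReal_mul (by positivity), ENNReal.ofReal_mul (hw0 z hz)]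
  have hprod : μ {ω | X ω ≤ g (Y ω) (d ω)} =
      ∫⁻ y in Ioi 0, ∫⁻ z in s, ENNReal.ofReal (r * exp (-(r * y)) * w z * G (g y z)) := by
    have hK : Measurable fun y => ∫⁻ z, μ {ω | X ω ≤ g y z} ∂μ.map d :=
      (hΦ.comp hg).lintegral_prod_right'
    rw [hindep.measure_le_comp₂_eq_lintegral_lintegral hX hd hY hg, hYr, lintegral_expMeasure hK]
    exact setLIntegral_congr_fun measurableSet_Ioi fun y hy => (hinner y (le_of_lt hy)).symm
  rw [hprod, integral_integral_eq_toReal_lintegral_lintegral]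
  · exact (by fun_prop : Measurable fun p : ℝ × ℝ => r * exp (-(r * p.1))).mul
      (hw.comp measurable_snd) |>.mul (hG.comp hg)
  · intro y
    filter_upwards [ae_restrict_mem hs] with z hz
    exact mul_nonneg (mul_nonneg (by positivity) (hw0 z hz)) (hG0 _)
  · filter_upwards [ae_restrict_mem measurableSet_Ioi] with y hy
    rw [hinner y (le_of_lt hy)]
    refine ENNReal.mul_ne_top ENNReal.ofReal_ne_top (ne_top_of_le_ne_top ENNReal.one_ne_top ?_)
    calc ∫⁻ z, μ {ω | X ω ≤ g y z} ∂μ.map d ≤ ∫⁻ _, 1 ∂μ.map d :=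
          lintegral_mono fun _ => prob_le_one
      _ = 1 := by simp [Measure.map_apply hd MeasurableSet.univ]

theorem sinr_le_iff {a l b P η σs ζ σ0 ds α x u y z : ℝ} (ha : 0 < a) (hl : 0 < l) (hb : 0 < b)
    (hP : 0 < P) (hη : 0 < η) (hσs : 0 < σs) (hζ : 0 < ζ) (hσ0 : 0 < σ0) (hds : 0 < ds)
    (hz : 0 < z) (hy : 0 ≤ y) :
    a * l * b * P * (η ^ 2 * (ds * z) ^ (-α) * u) / (l * b * (η * z ^ (-α) * σs * ζ) + y * P + σ0)
        ≤ x ↔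
      u ≤ x * ds ^ α / (a * P) *
        (ζ * σs / η + z ^ α / η ^ 2 * (y * P / (b * l) + σ0 / (b * l))) := by
  rw [rpow_neg (by positivity), rpow_neg hz.le, mul_rpow hds.le hz.le]
  have hA : 0 < z ^ α := rpow_pos_of_pos hz α
  have hB : 0 < ds ^ α := rpow_pos_of_pos hds α
  have hC : 0 < a * l * b * P * η ^ 2 * (ds ^ α * z ^ α)⁻¹ := by positivity
  have hN : 0 < l * b * (η * (z ^ α)⁻¹ * σs * ζ) + y * P + σ0 := by positivity
  have hT : x * ds ^ α / (a * P) * (ζ * σs / η + z ^ α / η ^ 2 * (y * P / (b * l) + σ0 / (b * l)))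
      = x * (l * b * (η * (z ^ α)⁻¹ * σs * ζ) + y * P + σ0) /
        (a * l * b * P * η ^ 2 * (ds ^ α * z ^ α)⁻¹) := by
    field_simp
    ring
  rw [div_le_iff₀ hN, hT, le_div_iff₀ hC]
  ring_nf

theorem stmt_16_general (a_r lam βr P σ0sq σssq η0 ζ ds α D p_r q_r σre : ℝ)
    (har : 0 < a_r) (hlam : 0 < lam) (hβr : 0 < βr)
    (hP : 0 < P) (hσ0 : 0 < σ0sq) (hσs : 0 < σssq) (hη0 : 0 < η0) (hζ : 0 < ζ)
    (hds : 0 < ds) (hp : 0 < p_r)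
    (T : ℝ → ℝ → ℝ → ℝ)
    (hT : ∀ x y z : ℝ, T x y z = x * ds ^ α / (a_r * P) *
      (ζ * σssq / η0 + z ^ α / η0 ^ 2 * (y * P / (βr * lam) + σ0sq / (βr * lam))))
    (F : ℝ → ℝ)
    (hF : ∀ x : ℝ, F x = ∫ y in Set.Ioi (0 : ℝ), ∫ z in Set.Icc (0 : ℝ) D,
      1 / σre ^ 2 * Real.exp (-y / σre ^ 2) * (2 * z / D ^ 2) *
        (lowerGamma p_r (Real.sqrt (T x y z) / q_r) / Real.Gamma p_r))
    (Ω : Type) [MeasureSpace Ω] (hprob : IsProbabilityMeasure (ℙ : Measure Ω))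
    (X d Y : Ω → ℝ) (hXm : Measurable X) (hdm : Measurable d) (hYm : Measurable Y)
    (hindep : iIndepFun ![X, d, Y] (ℙ : Measure Ω))
    (hX0 : ∀ᵐ ω ∂(ℙ : Measure Ω), 0 ≤ X ω)
    (hXcdf : ∀ x : ℝ, 0 ≤ x → (ℙ : Measure Ω) {ω | X ω ≤ x}
      = ENNReal.ofReal (lowerGamma p_r (Real.sqrt x / q_r) / Real.Gamma p_r))
    (hd : Measure.map d (ℙ : Measure Ω) = (volume.restrict (Set.Icc 0 D)).withDensity
      (fun z => ENNReal.ofReal (2 * z / D ^ 2)))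
    (hY : Measure.map Y (ℙ : Measure Ω) = expMeasure (1 / σre ^ 2))
    (Gc W : Ω → ℝ)
    (hGc : ∀ ω, Gc ω = η0 ^ 2 * (ds * d ω) ^ (-α) * X ω)
    (hW : ∀ ω, W ω = η0 * d ω ^ (-α) * σssq * ζ) :
    ∫ ω, Real.logb 2 (1 +
        a_r * lam * βr * P * Gc ω / (lam * βr * W ω + Y ω * P + σ0sq)) ∂(ℙ : Measure Ω)
      = (1 / Real.log 2) *
          ∫ x in Set.Ioi (0 : ℝ), 1 / (1 + x) * (1 - F x) := by
  simp only [hGc, hW]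
  set γ : Ω → ℝ := fun ω => a_r * lam * βr * P * (η0 ^ 2 * (ds * d ω) ^ (-α) * X ω) /
    (lam * βr * (η0 * d ω ^ (-α) * σssq * ζ) + Y ω * P + σ0sq)
  have hY0 := ae_nonneg_of_map_eq_expMeasure hYm hY
  have hd0 := ae_mem_Ioc_of_map_eq_withDensity hdm hd
  have hγ0 : 0 ≤ᵐ[ℙ] γ := by
    filter_upwards [hX0, hY0, hd0] with ω hXω hYω hdω
    have := hdω.1
    simp only [Pi.zero_apply, γ]
    positivity
  have hcdf : ∀ x ∈ Ioi (0 : ℝ), (ℙ {ω | γ ω ≤ x}).toReal = F x := by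
    intro x (hx : 0 < x)
    have hev : {ω | γ ω ≤ x} =ᵐ[ℙ] {ω | X ω ≤ T x (Y ω) (d ω)} := by
      filter_upwards [hY0, hd0] with ω hYω hdω
      show (γ ω ≤ x) = (X ω ≤ T x (Y ω) (d ω))
      rw [hT]
      exact propext (sinr_le_iff har hlam hβr hP hη0 hσs hζ hσ0 hds hdω.1 hYω)
    rw [measure_congr hev, toReal_measure_le_comp_eq_integral_integral hXm hdm hYm hindep
      (by fun_prop) (fun t => div_nonneg (lowerGamma_nonneg _ _) (Gamma_pos_of_pos hp).le) hXcdf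
      measurableSet_Icc (by fun_prop) (fun z hz => by have := hz.1; positivity) hd
      (by positivity) hY (by simp only [Function.uncurry_def, hT]; fun_prop)
      (fun y z hy hz => by have := hz.1; rw [hT]; positivity), hF]
    refine setIntegral_congr_fun measurableSet_Ioi fun y _ =>
      setIntegral_congr_fun measurableSet_Icc fun z _ => ?_
    ring_nf
  simp only [logb]
  rw [integral_div, integral_log_one_add_eq_integral_meas_le (by fun_prop) hγ0, one_div,
    inv_mul_eq_div]
  congr 1
  refine setIntegral_congr_fun measurableSet_Ioi fun x hx => ?_
  rw [hcdf x hx, one_div]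

/-- exact integral content of Theorem 3 (before quadrature): the ergodic
rate of the strong user `U_r` with ipSIC equals
`(1/ln 2)∫_0^∞ (1/(1+x))(1 − F(x)) dx`, where `F(x)` is the double integral of the
Gamma-type CDF against the exponential residual-interference and distance densities. -/
theorem stmt_16 (a_r lam βr P σ0sq σssq η0 ζ ds α D p_r q_r σre : ℝ)
    (har : 0 < a_r) (hlam : 0 < lam) (hβr : 0 < βr)
    (hP : 0 < P) (hσ0 : 0 < σ0sq) (hσs : 0 < σssq) (hη0 : 0 < η0) (hζ : 0 < ζ)
    (hds : 0 < ds) (hα : 0 < α) (hD : 0 < D) (hp : 0 < p_r) (hq : 0 < q_r)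
    (hσre : 0 < σre)
    (T : ℝ → ℝ → ℝ → ℝ)
    (hT : ∀ x y z : ℝ, T x y z = x * ds ^ α / (a_r * P) *
      (ζ * σssq / η0 + z ^ α / η0 ^ 2 * (y * P / (βr * lam) + σ0sq / (βr * lam))))
    (F : ℝ → ℝ)
    (hF : ∀ x : ℝ, F x = ∫ y in Set.Ioi (0 : ℝ), ∫ z in Set.Icc (0 : ℝ) D,
      1 / σre ^ 2 * Real.exp (-y / σre ^ 2) * (2 * z / D ^ 2) *
        (lowerGamma p_r (Real.sqrt (T x y z) / q_r) / Real.Gamma p_r))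
    (Ω : Type) [MeasureSpace Ω] (hprob : IsProbabilityMeasure (ℙ : Measure Ω))
    (X d Y : Ω → ℝ) (hXm : Measurable X) (hdm : Measurable d) (hYm : Measurable Y)
    (hindep : iIndepFun ![X, d, Y] (ℙ : Measure Ω))
    (hX0 : ∀ᵐ ω ∂(ℙ : Measure Ω), 0 ≤ X ω)
    (hXcdf : ∀ x : ℝ, 0 ≤ x → (ℙ : Measure Ω) {ω | X ω ≤ x}
      = ENNReal.ofReal (lowerGamma p_r (Real.sqrt x / q_r) / Real.Gamma p_r))
    (hd : Measure.map d (ℙ : Measure Ω) = (volume.restrict (Set.Icc 0 D)).withDensity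
      (fun z => ENNReal.ofReal (2 * z / D ^ 2)))
    (hY : Measure.map Y (ℙ : Measure Ω) = expMeasure (1 / σre ^ 2))
    (Gc W : Ω → ℝ)
    (hGc : ∀ ω, Gc ω = η0 ^ 2 * (ds * d ω) ^ (-α) * X ω)
    (hW : ∀ ω, W ω = η0 * d ω ^ (-α) * σssq * ζ) :
    ∫ ω, Real.logb 2 (1 +
        a_r * lam * βr * P * Gc ω / (lam * βr * W ω + Y ω * P + σ0sq)) ∂(ℙ : Measure Ω)
      = (1 / Real.log 2) *
          ∫ x in Set.Ioi (0 : ℝ), 1 / (1 + x) * (1 - F x) :=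
  stmt_16_general a_r lam βr P σ0sq σssq η0 ζ ds α D p_r q_r σre har hlam hβr hP hσ0 hσs hη0 hζ hds
    hp T hT F hF Ω hprob X d Y hXm hdm hYm hindep hX0 hXcdf hd hY Gc W hGc hW
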